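/- Let E be a finite-dimensional real normed vector space whose closed unit ball is equal to the convex hull of a finite set of points. Then the group of surjective linear isometries of E is finite. -/
import Mathlib


/-- If the closed unit ball of a finite-dimensional real normed vector space `E` is the
convex hull of a finite set of points, then the group of surjective linear isometries of `E`
is finite. -/
theorem linear_isometry_group_of_polyhedral_norm_finite
    (E : Type*) [NormedAddCommGroup E] [NormedSpace ℝ E] [FiniteDimensional ℝ E]
    (s : Finset E) (hball : Metric.closedBall (0 : E) 1 = convexHull ℝ (s : Set E)) :
    Finite (E ≃ₗᵢ[ℝ] E) := by
  set K := Metric.closedBall (0 : E) 1 with hKdef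
  set X := K.extremePoints ℝ with hX
  have hXs : X ⊆ (s : Set E) := by
    rw [hX, hball]; exact extremePoints_convexHull_subset
  have hXfin : X.Finite := s.finite_toSet.subset hXs
  have hK : IsCompact K := isCompact_closedBall 0 1
  have hKconv : Convex ℝ K := convex_closedBall 0 1
  -- the extreme points span E
  have hKsub : K ⊆ (Submodule.span ℝ X : Set E) := by
    have hcl := closure_convexHull_extremePoints hK hKconv
    rw [← hX] at hcl
    rw [← hcl]
    have h1 : convexHull ℝ X ⊆ (Submodule.span ℝ X : Set E) :=
      convexHull_min Submodule.subset_span (Submodule.span ℝ X).convex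
    have h2 : IsClosed (Submodule.span ℝ X : Set E) :=
      (Submodule.span ℝ X).closed_of_finiteDimensional
    exact closure_minimal h1 h2
  have hspan : Submodule.span ℝ X = ⊤ := by
    rw [Submodule.eq_top_iff']
    intro v
    have hmem : (‖v‖ + 1)⁻¹ • v ∈ K := by
      rw [hKdef, Metric.mem_closedBall, dist_zero_right, norm_smul, norm_inv,
        Real.norm_eq_abs, abs_of_pos (by positivity : (0:ℝ) < ‖v‖ + 1)]
      rw [inv_mul_le_one₀ (by positivity)]
      linarith [norm_nonneg v]
    have := (Submodule.span ℝ X).smul_mem (‖v‖ + 1) (hKsub hmem)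
    rwa [smul_smul, mul_inv_cancel₀ (by positivity : (‖v‖:ℝ) + 1 ≠ 0), one_smul] at this
  -- isometries map X to X
  have hmaps : ∀ (f : E ≃ₗᵢ[ℝ] E), ∀ x ∈ X, f x ∈ X := by
    intro f x hx
    have himg : (f : E → E) '' K = K := by
      rw [hKdef]
      ext y
      simp only [Set.mem_image, Metric.mem_closedBall, dist_zero_right]
      constructor
      · rintro ⟨z, hz, rfl⟩; rwa [f.norm_map]
      · intro hy; exact ⟨f.symm y, by rwa [f.symm.norm_map], f.apply_symm_apply y⟩
    have := image_extremePoints f.toLinearEquiv K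
    rw [show ((f.toLinearEquiv : E ≃ₗ[ℝ] E) : E → E) = (f : E → E) from rfl, himg] at this
    rw [hX, ← this]
    exact Set.mem_image_of_mem _ hx
  -- inject into a finite function type
  haveI : Finite X := hXfin.to_subtype
  have hinj : Function.Injective
      (fun (f : E ≃ₗᵢ[ℝ] E) => (fun x : X => (⟨f x, hmaps f x x.2⟩ : X))) := by
    intro f g hfg
    have heq : Set.EqOn (f : E → E) (g : E → E) X := by
      intro x hx
      have := congrFun hfg ⟨x, hx⟩
      simpa using congrArg Subtype.val this
    have heq2 : (f.toLinearEquiv : E →ₗ[ℝ] E) = (g.toLinearEquiv : E →ₗ[ℝ] E) :=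
      LinearMap.ext_on hspan heq
    ext v
    exact DFunLike.congr_fun heq2 v
  exact Finite.of_injective _ hinj
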